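/- arXiv:1209.1007 — 4 statements merged into one kernel-verified Lean document; each statement's English description precedes it below -/
import Mathlib

section
/- Let α₁, α₂, β₁, β₂ be strictly positive rationals. Define vectors in ℚ⁴: v₁ = α₁ • (-1,0,1,0), v₂ = α₂ • (0,1,0,-1), u₁ = β₁ • (1,0,-1,0), u₂ = β₂ • (0,-1,0,1). For m, n ∈ ℚ let x(m,n) = m • (v₁ + v₂) + n • (u₁ + u₂) with coordinates (x₁,x₂,x₃,x₄). Then β₁/α₁ = β₂/α₂ if and only if for all nonnegative rationals m, n, max(min(x₁,x₂), min(x₃,x₄)) ≤ 0. -/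
/-!
The coordinates of `x m n` are `(a, b, -a, -b)` with `a = n β₁ - m α₁`, `b = m α₂ - n β₂`, and
`max (min a b) (min (-a) (-b)) ≤ 0` says exactly that `a * b ≤ 0`. Writing `rᵢ = βᵢ / αᵢ`,
`a * b = α₁ α₂ (n r₁ - m) (m - n r₂)`: if `r₁ = r₂` this is minus a square, and otherwise it is
positive for `n = 1` and `m` strictly between `r₁` and `r₂`.
-/

theorem max_min_min_neg_nonpos_iff {R : Type*} [Ring R] [LinearOrder R] [IsStrictOrderedRing R]
    (a b : R) : max (min a b) (min (-a) (-b)) ≤ 0 ↔ a * b ≤ 0 := by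
  rw [mul_nonpos_iff, max_le_iff, min_le_iff, min_le_iff, neg_nonpos, neg_nonpos]
  constructor
  · rcases le_total 0 a with ha | ha <;> rcases le_total 0 b with hb | hb <;> tauto
  · tauto

theorem forall_sub_mul_sub_nonpos_iff {R : Type*} [CommRing R] [LinearOrder R]
    [IsStrictOrderedRing R] {α₁ α₂ β₁ β₂ : R} (hα₁ : 0 < α₁) (hα₂ : 0 < α₂)
    (hβ₁ : 0 ≤ β₁) (hβ₂ : 0 ≤ β₂) :
    (∀ m n : R, 0 ≤ m → 0 ≤ n → (n * β₁ - m * α₁) * (m * α₂ - n * β₂) ≤ 0) ↔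
      β₁ * α₂ = β₂ * α₁ := by
  constructor
  · intro h
    -- `m / n` is the midpoint of `β₁ / α₁` and `β₂ / α₂`
    have hmid := h (β₁ * α₂ + β₂ * α₁) (2 * α₁ * α₂) (by positivity) (by positivity)
    have hsq : (2 * α₁ * α₂ * β₁ - (β₁ * α₂ + β₂ * α₁) * α₁) *
        ((β₁ * α₂ + β₂ * α₁) * α₂ - 2 * α₁ * α₂ * β₂) = α₁ * α₂ * (β₁ * α₂ - β₂ * α₁) ^ 2 := by
      ring
    rw [hsq] at hmid
    have hsq_zero : (β₁ * α₂ - β₂ * α₁) ^ 2 = 0 :=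
      le_antisymm (nonpos_of_mul_nonpos_right hmid (by positivity)) (sq_nonneg _)
    exact sub_eq_zero.mp (pow_eq_zero_iff two_ne_zero |>.mp hsq_zero)
  · intro h m n _ _
    have hneg_sq :
        α₂ * ((n * β₁ - m * α₁) * (m * α₂ - n * β₂)) = -(α₁ * (m * α₂ - n * β₂) ^ 2) := by
      linear_combination n * (m * α₂ - n * β₂) * h
    exact nonpos_of_mul_nonpos_right (hneg_sq ▸ neg_nonpos.mpr (by positivity)) hα₂

theorem stmt_0 (α₁ α₂ β₁ β₂ : ℚ) (hα₁ : 0 < α₁) (hα₂ : 0 < α₂)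
    (hβ₁ : 0 < β₁) (hβ₂ : 0 < β₂)
    (v₁ v₂ u₁ u₂ : Fin 4 → ℚ)
    (hv₁ : v₁ = α₁ • ![-1, 0, 1, 0]) (hv₂ : v₂ = α₂ • ![0, 1, 0, -1])
    (hu₁ : u₁ = β₁ • ![1, 0, -1, 0]) (hu₂ : u₂ = β₂ • ![0, -1, 0, 1])
    (x : ℚ → ℚ → Fin 4 → ℚ)
    (hx : ∀ m n : ℚ, x m n = m • (v₁ + v₂) + n • (u₁ + u₂)) :
    β₁ / α₁ = β₂ / α₂ ↔
      ∀ m n : ℚ, 0 ≤ m → 0 ≤ n →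
        max (min (x m n 0) (x m n 1)) (min (x m n 2) (x m n 3)) ≤ 0 := by
  have hx_eq : ∀ m n : ℚ, x m n =
      ![n * β₁ - m * α₁, m * α₂ - n * β₂, -(n * β₁ - m * α₁), -(m * α₂ - n * β₂)] := by
    intro m n
    simp only [hx, hv₁, hv₂, hu₁, hu₂, Matrix.smul_cons, Matrix.smul_empty, Matrix.add_cons,
      Matrix.empty_add_empty, Matrix.head_cons, Matrix.tail_cons, smul_eq_mul, Matrix.vecCons_inj]
    refine ⟨?_, ?_, ?_, ?_, trivial⟩ <;> ring
  rw [div_eq_div_iff hα₁.ne' hα₂.ne', ← forall_sub_mul_sub_nonpos_iff hα₁ hα₂ hβ₁.le hβ₂.le]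
  simp only [hx_eq, Matrix.cons_val, max_min_min_neg_nonpos_iff]
end

section
/- A rational number x satisfies x > 0 if and only if there exist rationals x₁,…,x₈ such that x = (1 + x₁² + x₂² + x₃² + x₄²) / (1 + x₅² + x₆² + x₇² + x₈²). -/
/-!
A positive rational `x` is `(1 + x) / (1 + x⁻¹)`, and both `x` and `x⁻¹` are sums of four rational
squares by Lagrange's theorem applied to `num * den`. Conversely such a quotient is visibly positive.
-/

theorem Rat.exists_sum_four_sq_of_nonneg {r : ℚ} (hr : 0 ≤ r) :
    ∃ a b c d : ℚ, a ^ 2 + b ^ 2 + c ^ 2 + d ^ 2 = r := by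
  lift r to ℚ≥0 using hr
  obtain ⟨a, b, c, d, h⟩ := Nat.sum_four_squares (r.num * r.den)
  have hden : (r.den : ℚ) ≠ 0 := by positivity
  have hnum : (r : ℚ) * r.den = r.num := by exact_mod_cast r.mul_den_eq_num
  have hsq : (a : ℚ) ^ 2 + b ^ 2 + c ^ 2 + d ^ 2 = r.num * r.den := by exact_mod_cast h
  refine ⟨a / r.den, b / r.den, c / r.den, d / r.den, ?_⟩
  field_simp
  linear_combination hsq - (r.den : ℚ) * hnum

theorem stmt_2 (x : ℚ) :
    0 < x ↔ ∃ x₁ x₂ x₃ x₄ x₅ x₆ x₇ x₈ : ℚ,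
      x = (1 + x₁^2 + x₂^2 + x₃^2 + x₄^2) / (1 + x₅^2 + x₆^2 + x₇^2 + x₈^2) := by
  refine ⟨fun hx => ?_, ?_⟩
  · obtain ⟨a, b, c, d, hnum⟩ := Rat.exists_sum_four_sq_of_nonneg hx.le
    obtain ⟨e, f, g, h, hden⟩ := Rat.exists_sum_four_sq_of_nonneg (inv_nonneg.mpr hx.le)
    refine ⟨a, b, c, d, e, f, g, h, ?_⟩
    calc x = (1 + x) / (1 + x⁻¹) := by field_simp; ring
      _ = _ := by rw [← hden, ← hnum]; ring
  · rintro ⟨a, b, c, d, e, f, g, h, rfl⟩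
    positivity
end

section
/- There exists an infinite sequence π ∈ ({(9,1),(1,9)})^ω such that liminf of the Cesàro averages of the first coordinate of π is at most 2 and liminf of the Cesàro averages of the second coordinate of π is at most 2. -/
/-! Split time into the blocks `[9^j, 9^(j+1))` and play `(1,9)` on even blocks, `(9,1)` on odd
ones. At the end `9^(j+1)` of block `j`, the coordinate that was `1` throughout that block has sum
at most `9 · 9^j + 8 · 9^j`, i.e. average at most `17/9 ≤ 2`. Each coordinate is `1` on infinitely
many blocks, so both Cesàro averages drop to `2` infinitely often. -/

open Filter Finset

lemma sum_range_le_of_le_of_le {f : ℕ → ℝ} {m n : ℕ} {a b : ℝ} (hmn : m ≤ n)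
    (hb : ∀ t ∈ range m, f t ≤ b) (ha : ∀ t ∈ Ico m n, f t ≤ a) :
    ∑ t ∈ range n, f t ≤ m * b + (n - m : ℕ) * a := by
  rw [← sum_range_add_sum_Ico f hmn]
  have hhead := sum_le_card_nsmul _ f b hb
  have htail := sum_le_card_nsmul _ f a ha
  rw [card_range, nsmul_eq_mul] at hhead
  rw [Nat.card_Ico, nsmul_eq_mul] at htail
  exact add_le_add hhead htail

lemma cesaro_le_two_of_le_one_on_Ico {f : ℕ → ℝ} {m : ℕ} (hm : 0 < m) (h9 : ∀ t, f t ≤ 9)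
    (h1 : ∀ t ∈ Ico m (9 * m), f t ≤ 1) :
    (∑ t ∈ range (9 * m), f t) / (9 * m : ℕ) ≤ 2 := by
  have hsum := sum_range_le_of_le_of_le (by omega) (fun t _ ↦ h9 t) h1
  rw [show 9 * m - m = 8 * m by omega] at hsum
  have hm' : (0 : ℝ) < m := by exact_mod_cast hm
  rw [div_le_iff₀ (by positivity)]
  push_cast at hsum ⊢
  linarith

lemma liminf_cesaro_le_two {f : ℕ → ℝ} (h0 : ∀ t, 0 ≤ f t) (h9 : ∀ t, f t ≤ 9)
    (h1 : ∃ᶠ j in atTop, ∀ t ∈ Ico (9 ^ j) (9 ^ (j + 1)), f t ≤ 1) :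
    liminf (fun n : ℕ ↦ (∑ t ∈ range n, f t) / n) atTop ≤ 2 := by
  have hblockEnds : Tendsto (fun j : ℕ ↦ 9 ^ (j + 1)) atTop atTop :=
    (tendsto_pow_atTop_atTop_of_one_lt (by norm_num)).comp (tendsto_add_atTop_nat 1)
  refine liminf_le_of_frequently_le (hblockEnds.frequently (h1.mono fun j hj ↦ ?_)) ?_
  · show (∑ t ∈ range (9 ^ (j + 1)), f t) / (9 ^ (j + 1) : ℕ) ≤ 2
    rw [pow_succ'] at hj ⊢
    exact cesaro_le_two_of_le_one_on_Ico (by positivity) h9 hj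
  · exact isBoundedUnder_of_eventually_ge
      (Eventually.of_forall fun n ↦ div_nonneg (sum_nonneg fun t _ ↦ h0 t) n.cast_nonneg)

noncomputable def blockSeq (t : ℕ) : ℝ × ℝ :=
  if Even (Nat.log 9 t) then (1, 9) else (9, 1)

lemma blockSeq_eq_or_eq (t : ℕ) : blockSeq t = (9, 1) ∨ blockSeq t = (1, 9) := by
  unfold blockSeq
  split_ifs <;> simp

lemma blockSeq_of_mem_Ico {j t : ℕ} (ht : t ∈ Ico (9 ^ j) (9 ^ (j + 1))) :
    blockSeq t = if Even j then (1, 9) else (9, 1) := by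
  rw [mem_Ico] at ht
  rw [blockSeq, Nat.log_eq_of_pow_le_of_lt_pow ht.1 ht.2]

theorem stmt_14 :
    ∃ π : ℕ → ℝ × ℝ,
      (∀ t, π t = (9, 1) ∨ π t = (1, 9)) ∧
      Filter.liminf (fun n : ℕ => (∑ t ∈ Finset.range n, (π t).1) / n) Filter.atTop ≤ 2 ∧
      Filter.liminf (fun n : ℕ => (∑ t ∈ Finset.range n, (π t).2) / n) Filter.atTop ≤ 2 := by
  refine ⟨blockSeq, blockSeq_eq_or_eq, ?_, ?_⟩
  · refine liminf_cesaro_le_two (fun t ↦ ?_) (fun t ↦ ?_)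
      (Nat.frequently_even.mono fun j hj t ht ↦ ?_)
    iterate 2 rcases blockSeq_eq_or_eq t with h | h <;> norm_num [h]
    simp [blockSeq_of_mem_Ico ht, hj]
  · refine liminf_cesaro_le_two (fun t ↦ ?_) (fun t ↦ ?_)
      (Nat.frequently_odd.mono fun j hj t ht ↦ ?_)
    iterate 2 rcases blockSeq_eq_or_eq t with h | h <;> norm_num [h]
    simp [blockSeq_of_mem_Ico ht, Nat.not_even_iff_odd.mpr hj]
end

section
/- Let a : ℕ → ℝᵏ be a sequence taking finitely many values, and suppose for each coordinate i the value LimInfAvgᵢ(a) = liminf_{n→∞}(1/n)∑_{t=1}^n a(t)ᵢ exists (is finite). Then for every ε > 0 there exist indices m < n such that for every coordinate i, (1/(n-m))∑_{t=m+1}^{n} a(t)ᵢ ≥ LimInfAvgᵢ(a) - ε. -/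
/-! Take `m = 0`. Each coordinate of `a` is bounded, so its Cesàro averages are bounded below
and hence eventually exceed `L i - ε`; as there are finitely many coordinates, a single large
`n` works for all of them simultaneously. -/

open Filter Finset

lemma le_sum_range_div_of_forall_le {f : ℕ → ℝ} {c : ℝ} (hf : ∀ t, c ≤ f t) {n : ℕ}
    (hn : n ≠ 0) : c ≤ (∑ t ∈ range n, f t) / n := by
  rw [le_div_iff₀ (by positivity)]
  simpa [mul_comm] using card_nsmul_le_sum (range n) f c fun t _ => hf t

lemma isBoundedUnder_ge_sum_range_div {f : ℕ → ℝ} (hf : BddBelow (Set.range f)) :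
    IsBoundedUnder (· ≥ ·) atTop fun n : ℕ => (∑ t ∈ range n, f t) / n := by
  obtain ⟨c, hc⟩ := hf
  exact isBoundedUnder_of_eventually_ge <| (eventually_ne_atTop 0).mono fun n hn =>
    le_sum_range_div_of_forall_le (fun t => hc ⟨t, rfl⟩) hn

lemma eventually_forall_lt_sum_range_div {ι : Type*} [Finite ι] {a : ℕ → ι → ℝ}
    (ha : ∀ i, BddBelow (Set.range fun t => a t i)) {b : ι → ℝ}
    (hb : ∀ i, b i < liminf (fun n : ℕ => (∑ t ∈ range n, a t i) / n) atTop) :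
    ∀ᶠ n : ℕ in atTop, ∀ i, b i < (∑ t ∈ range n, a t i) / n :=
  eventually_all.2 fun i =>
    eventually_lt_of_lt_liminf (hb i) (isBoundedUnder_ge_sum_range_div (ha i))

theorem stmt_18 (k : ℕ) (a : ℕ → Fin k → ℝ) (hfin : (Set.range a).Finite)
    (L : Fin k → ℝ)
    (hL : ∀ i, Filter.liminf
        (fun n : ℕ => (∑ t ∈ Finset.range n, a t i) / n) Filter.atTop = L i) :
    ∀ ε > 0, ∃ m n : ℕ, m < n ∧
      ∀ i, L i - ε ≤ (∑ t ∈ Finset.Ico m n, a t i) / ((n : ℝ) - m) := by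
  intro ε hε
  have hbdd : ∀ i, BddBelow (Set.range fun t => a t i) := fun i =>
    (Set.range_comp (fun v : Fin k → ℝ => v i) a ▸ hfin.image _).bddBelow
  have hlt : ∀ᶠ n : ℕ in atTop, ∀ i, L i - ε < (∑ t ∈ range n, a t i) / n :=
    eventually_forall_lt_sum_range_div hbdd fun i => by rw [hL i]; linarith
  obtain ⟨n, hn, hpos⟩ := (hlt.and (eventually_gt_atTop 0)).exists
  refine ⟨0, n, hpos, fun i => ?_⟩
  simpa only [← range_eq_Ico, Nat.cast_zero, sub_zero] using (hn i).le
end
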